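/- Let α ∈ (0,1], let κ be a real number with 0 ≤ κ ≤ α/2, let b be a populated pre-multi-index, and let 𝐝 = (𝔨₀,𝔨₁,k₀,k₁) be a derivator such that b^{𝔨₀}_{k₀} ≥ 1. Set m = k₀ + 1 − k₁ (so m ∈ {0,1}). Then |b| + (α−1−κ)·(𝔰(b^𝔠) + 2𝔰(b^𝔢) + 𝔰(b^𝔣) − m) − m ≥ −2 + α − κ. -/

import Mathlib

/-- The seven labels 𝔅 = {𝔟,𝔠,𝔡,𝔢,𝔣,𝔤,𝔥}. -/
inductive Lbl : Type
  | b | c | d | e | f | g | h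
  deriving DecidableEq

instance instFintypeLbl : Fintype Lbl where
  elems := {Lbl.b, Lbl.c, Lbl.d, Lbl.e, Lbl.f, Lbl.g, Lbl.h}
  complete := by intro x; cases x <;> simp

/-- Size 𝔰(q) = Σᵢ qᵢ of a finitely supported sequence. -/
def seqSize (q : ℕ →₀ ℕ) : ℕ := q.sum fun _ n => n

/-- Order 𝔬(q) = Σᵢ i·qᵢ of a finitely supported sequence. -/
def seqOrder (q : ℕ →₀ ℕ) : ℕ := q.sum fun i n => i * n

/-- Length 𝔩(q) = max of the support of q (0 if q = 0). -/
def seqLen (q : ℕ →₀ ℕ) : ℕ := q.support.sup id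

/-- A pre-multi-index: a family of seven finitely supported sequences. -/
abbrev PMI : Type := Lbl → (ℕ →₀ ℕ)

/-- Size of a pre-multi-index. -/
def pmiSize (a : PMI) : ℕ := ∑ k : Lbl, seqSize (a k)

/-- Order of a pre-multi-index. -/
def pmiOrder (a : PMI) : ℕ :=
  (∑ k : Lbl, seqOrder (a k)) + seqSize (a Lbl.d) + seqSize (a Lbl.f)
    + 2 * seqSize (a Lbl.g)

/-- Length of a pre-multi-index. -/
def pmiLen (a : PMI) : ℕ := Finset.univ.sup fun k : Lbl => seqLen (a k)

/-- A pre-multi-index is populated if 𝔰(a) = 𝔬(a) + 1. -/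
def Populated (a : PMI) : Prop := pmiSize a = pmiOrder a + 1

/-- The scaling |a| of a pre-multi-index, for a real parameter α. -/
noncomputable def scaling (α : ℝ) (a : PMI) : ℝ :=
  -(2 - α) * (pmiSize a : ℝ) + 2 * (pmiOrder a : ℝ)
    + (2 - α) * ((seqSize (a Lbl.b) : ℝ) + (seqSize (a Lbl.c) : ℝ) + (seqSize (a Lbl.e) : ℝ))
    + (1 - α) * ((seqSize (a Lbl.d) : ℝ) + (seqSize (a Lbl.f) : ℝ))
    - α * (seqSize (a Lbl.g) : ℝ)

/-- 1^𝔨_k : the pre-multi-index whose only nonzero entry is a single 1 in the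
𝔨-component at index k. -/
noncomputable def onePMI (k : Lbl) (n : ℕ) : PMI :=
  fun k' => if k' = k then Finsupp.single n 1 else 0

/-- A derivator (𝔨₀,𝔨₁,k₀,k₁). -/
def IsDerivator (l₀ l₁ : Lbl) (k₀ k₁ : ℕ) : Prop :=
  (l₀ = l₁ ∧ k₁ = k₀ + 1) ∨
    (((l₀ = Lbl.c ∧ l₁ = Lbl.d) ∨ (l₀ = Lbl.e ∧ l₁ = Lbl.f) ∨ (l₀ = Lbl.f ∧ l₁ = Lbl.g))
      ∧ k₁ = k₀)

/-
For a populated `b` the relation `𝔰(b) = 𝔬(b) + 1` turns the scaling into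
`|b| = -2 + 2(𝔰(b^𝔟) + 𝔰(b^𝔠) + 𝔰(b^𝔢)) + 𝔰(b^𝔡) + 𝔰(b^𝔣) + α 𝔰(b^𝔥)`, and since
`𝔬(b) ≥ 𝔰(b^𝔡) + 𝔰(b^𝔣) + 2𝔰(b^𝔤)` at least one entry of `b` lies in the 𝔟, 𝔠, 𝔢 or 𝔥
component. With `β = α - κ ∈ [0, 1]` the claim becomes
`β (1 + m) ≤ 2𝔰(b^𝔟) + (1 + β)𝔰(b^𝔠) + 2β 𝔰(b^𝔢) + 𝔰(b^𝔡) + β 𝔰(b^𝔣) + α 𝔰(b^𝔥)`.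
For `m = 0` the entry in 𝔟, 𝔠, 𝔢 or 𝔥 pays for `β`; for `m = 1` the derivator sits in
the 𝔠, 𝔢 or 𝔣 component, and that entry pays for the second `β`.
-/

lemma sum_univ_lbl {M : Type*} [AddCommMonoid M] (f : Lbl → M) :
    ∑ k : Lbl, f k = f .b + f .c + f .d + f .e + f .f + f .g + f .h := by
  rw [show (Finset.univ : Finset Lbl) = {.b, .c, .d, .e, .f, .g, .h} from rfl]
  simp [add_assoc]

lemma apply_le_seqSize (q : ℕ →₀ ℕ) (k : ℕ) : q k ≤ seqSize q :=
  Finsupp.le_degree k q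

lemma pmiSize_eq (a : PMI) :
    pmiSize a = seqSize (a .b) + seqSize (a .c) + seqSize (a .d) + seqSize (a .e)
      + seqSize (a .f) + seqSize (a .g) + seqSize (a .h) :=
  sum_univ_lbl _

lemma le_pmiOrder (a : PMI) :
    seqSize (a .d) + seqSize (a .f) + 2 * seqSize (a .g) ≤ pmiOrder a := by
  unfold pmiOrder
  omega

namespace Populated

variable {b : PMI} (hb : Populated b)
include hb

lemma pmiOrder_eq :
    pmiOrder b + 1 = seqSize (b .b) + seqSize (b .c) + seqSize (b .d) + seqSize (b .e)
      + seqSize (b .f) + seqSize (b .g) + seqSize (b .h) :=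
  hb ▸ pmiSize_eq b

lemma seqSize_g_lt :
    seqSize (b .g) < seqSize (b .b) + seqSize (b .c) + seqSize (b .e) + seqSize (b .h) := by
  have := le_pmiOrder b
  have := hb.pmiOrder_eq
  omega

lemma scaling_eq (α : ℝ) :
    scaling α b = -2 + 2 * (seqSize (b .b) + seqSize (b .c) + seqSize (b .e))
      + seqSize (b .d) + seqSize (b .f) + α * seqSize (b .h) := by
  have hO : (pmiOrder b : ℝ) + 1 = seqSize (b .b) + seqSize (b .c) + seqSize (b .d)
      + seqSize (b .e) + seqSize (b .f) + seqSize (b .g) + seqSize (b .h) := by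
    exact_mod_cast hb.pmiOrder_eq
  rw [scaling, hb]
  push_cast
  linear_combination α * hO

end Populated

theorem stmt9 (α κ : ℝ) (hα : α ∈ Set.Ioc (0:ℝ) 1) (hκ0 : 0 ≤ κ) (hκ : κ ≤ α / 2)
    (b : PMI) (hb : Populated b) (l₀ l₁ : Lbl) (k₀ k₁ : ℕ)
    (hd : IsDerivator l₀ l₁ k₀ k₁) (hge : 1 ≤ (b l₀) k₀) :
    -2 + α - κ ≤
      scaling α b
        + (α - 1 - κ) * ((seqSize (b Lbl.c) : ℝ) + 2 * (seqSize (b Lbl.e) : ℝ)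
            + (seqSize (b Lbl.f) : ℝ) - ((k₀ + 1 - k₁ : ℕ) : ℝ))
        - ((k₀ + 1 - k₁ : ℕ) : ℝ) := by
  obtain ⟨-, hα1⟩ := hα
  have hl₀ : (1 : ℝ) ≤ seqSize (b l₀) := by exact_mod_cast hge.trans (apply_le_seqSize _ _)
  have hone : (1 : ℝ) ≤ seqSize (b .b) + seqSize (b .c) + seqSize (b .e) + seqSize (b .h) := by
    exact_mod_cast Nat.one_le_of_lt hb.seqSize_g_lt
  have hβ0 : 0 ≤ α - κ := by linarith
  have hβ1 : α - κ ≤ 1 := by linarith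
  have hsb := (seqSize (b .b)).cast_nonneg (α := ℝ)
  have hsc := (seqSize (b .c)).cast_nonneg (α := ℝ)
  have hsd := (seqSize (b .d)).cast_nonneg (α := ℝ)
  have hse := (seqSize (b .e)).cast_nonneg (α := ℝ)
  have hsf := (seqSize (b .f)).cast_nonneg (α := ℝ)
  have hsh := (seqSize (b .h)).cast_nonneg (α := ℝ)
  rw [hb.scaling_eq α]
  rcases hd with ⟨-, rfl⟩ | ⟨hl, rfl⟩
  · simp only [Nat.sub_self, Nat.cast_zero]
    nlinarith
  · simp only [Nat.add_sub_cancel_left, Nat.cast_one]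
    rcases hl with ⟨rfl, -⟩ | ⟨rfl, -⟩ | ⟨rfl, -⟩ <;> nlinarith
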